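/- arXiv:1304.5337 — 2 statements merged into one kernel-verified Lean document; each statement's English description precedes it below -/
import Mathlib

section
/- Let K > 0, k, h ∈ ℝ, let U ⊆ ℝ² be open, and let w : U → ℝ be four times continuously differentiable with L w = kK − h·e^x and w_xx > 0 on U, where L w = w_xx + (k−h−1)w_x − k·w − w_t. Then the function v := w_xt/w_xx is well defined on U and satisfies the parabolic equation v_xx + ((k−h−1) + 2·w_xxx/w_xx)·v_x + ((L w_xx)/w_xx)·v − v_t = 0 on U, where L w_xx = −h·e^x. -/
/-!
Write `a = w_xt` and `b = w_xx`. Since `L` has constant coefficients it commutes with `∂ₓ` and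
`∂ₜ` (Schwarz), so differentiating `L w = kK - h eˣ` gives `L w_x = -h eˣ`, hence
`L b = -h eˣ` and `L a = 0`. The Leibniz rule for `L` applied to `a = v b` gives
`L a = b (v_xx + (k-h-1) v_x - v_t) + 2 b_x v_x + v L b`, and dividing by `b > 0` yields the
equation for `v`.
-/
open Real Set

/-- Partial derivative in the first (space) variable. -/
noncomputable def pdx (f : ℝ × ℝ → ℝ) : ℝ × ℝ → ℝ :=
  fun p => deriv (fun x => f (x, p.2)) p.1

/-- Partial derivative in the second (time) variable. -/
noncomputable def pdt (f : ℝ × ℝ → ℝ) : ℝ × ℝ → ℝ :=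
  fun p => deriv (fun t => f (p.1, t)) p.2

/-- The constant-coefficient parabolic operator `L f = f_xx + (k-h-1) f_x - k f - f_t`. -/
noncomputable def Lop (k h : ℝ) (f : ℝ × ℝ → ℝ) : ℝ × ℝ → ℝ :=
  fun p => pdx (pdx f) p + (k - h - 1) * pdx f p - k * f p - pdt f p

open Topology

section

variable {U : Set (ℝ × ℝ)} {f g : ℝ × ℝ → ℝ} {p : ℝ × ℝ} {n m : WithTop ℕ∞} {k h : ℝ}

lemma pdx_eq_fderiv (hf : DifferentiableAt ℝ f p) : pdx f p = fderiv ℝ f p (1, 0) :=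
  (hf.hasFDerivAt.comp_hasDerivAt p.1
    ((hasDerivAt_id p.1).prodMk (hasDerivAt_const p.1 p.2))).deriv

lemma pdt_eq_fderiv (hf : DifferentiableAt ℝ f p) : pdt f p = fderiv ℝ f p (0, 1) :=
  (hf.hasFDerivAt.comp_hasDerivAt p.2
    ((hasDerivAt_const p.2 p.1).prodMk (hasDerivAt_id p.2))).deriv

lemma hasDerivAt_pdx (hf : DifferentiableAt ℝ f p) :
    HasDerivAt (fun x => f (x, p.2)) (pdx f p) p.1 :=
  (hf.comp p.1 (differentiableAt_id.prodMk (differentiableAt_const p.2))).hasDerivAt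

lemma hasDerivAt_pdt (hf : DifferentiableAt ℝ f p) :
    HasDerivAt (fun t => f (p.1, t)) (pdt f p) p.2 :=
  (hf.comp p.2 ((differentiableAt_const p.1).prodMk differentiableAt_id)).hasDerivAt

lemma pdx_add (hf : DifferentiableAt ℝ f p) (hg : DifferentiableAt ℝ g p) :
    pdx (f + g) p = pdx f p + pdx g p := by
  simp [pdx_eq_fderiv, hf, hg, hf.add hg, fderiv_add hf hg]

lemma pdx_mul (hf : DifferentiableAt ℝ f p) (hg : DifferentiableAt ℝ g p) :
    pdx (f * g) p = pdx f p * g p + f p * pdx g p := by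
  simp [pdx_eq_fderiv, hf, hg, hf.mul hg, fderiv_mul hf hg]
  ring

lemma pdt_mul (hf : DifferentiableAt ℝ f p) (hg : DifferentiableAt ℝ g p) :
    pdt (f * g) p = pdt f p * g p + f p * pdt g p := by
  simp [pdt_eq_fderiv, hf, hg, hf.mul hg, fderiv_mul hf hg]
  ring

lemma Filter.EventuallyEq.pdx_eq (hfg : f =ᶠ[𝓝 p] g) : pdx f p = pdx g p :=
  (hfg.comp_tendsto ((continuous_id.prodMk continuous_const).tendsto' p.1 p rfl)).deriv_eq

lemma Filter.EventuallyEq.pdt_eq (hfg : f =ᶠ[𝓝 p] g) : pdt f p = pdt g p :=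
  (hfg.comp_tendsto ((continuous_const.prodMk continuous_id).tendsto' p.2 p rfl)).deriv_eq

lemma Set.EqOn.pdx (hfg : EqOn f g U) (hU : IsOpen U) : EqOn (pdx f) (pdx g) U :=
  fun _ hq => (hfg.eventuallyEq_of_mem (hU.mem_nhds hq)).pdx_eq

lemma Set.EqOn.pdt (hfg : EqOn f g U) (hU : IsOpen U) : EqOn (pdt f) (pdt g) U :=
  fun _ hq => (hfg.eventuallyEq_of_mem (hU.mem_nhds hq)).pdt_eq

lemma Set.EqOn.Lop (hfg : EqOn f g U) (hU : IsOpen U) : EqOn (Lop k h f) (Lop k h g) U :=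
  fun q hq => by
    simp only [_root_.Lop, (hfg.pdx hU).pdx hU hq, hfg.pdx hU hq, hfg hq, hfg.pdt hU hq]

lemma IsOpen.differentiableAt_of_contDiffOn (hU : IsOpen U) (hf : ContDiffOn ℝ n f U)
    (hn : n ≠ 0) (hp : p ∈ U) : DifferentiableAt ℝ f p :=
  (hf.differentiableOn hn).differentiableAt (hU.mem_nhds hp)

lemma ContDiffOn.pdx (hf : ContDiffOn ℝ n f U) (hU : IsOpen U) (hmn : m + 1 ≤ n) :
    ContDiffOn ℝ m (pdx f) U :=
  ((hf.fderiv_of_isOpen hU hmn).clm_apply contDiffOn_const).congr fun _ hq =>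
    pdx_eq_fderiv (hU.differentiableAt_of_contDiffOn hf
      (ne_bot_of_le_ne_bot one_ne_zero (le_add_self.trans hmn)) hq)

lemma ContDiffOn.pdt (hf : ContDiffOn ℝ n f U) (hU : IsOpen U) (hmn : m + 1 ≤ n) :
    ContDiffOn ℝ m (pdt f) U :=
  ((hf.fderiv_of_isOpen hU hmn).clm_apply contDiffOn_const).congr fun _ hq =>
    pdt_eq_fderiv (hU.differentiableAt_of_contDiffOn hf
      (ne_bot_of_le_ne_bot one_ne_zero (le_add_self.trans hmn)) hq)

lemma pdt_pdx_eq_pdx_pdt (hU : IsOpen U) (hf : ContDiffOn ℝ 2 f U) (hp : p ∈ U) :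
    pdt (pdx f) p = pdx (pdt f) p := by
  have hfp : ContDiffAt ℝ 2 f p := hf.contDiffAt (hU.mem_nhds hp)
  have hd : ∀ᶠ q in 𝓝 p, DifferentiableAt ℝ f q :=
    (hU.eventually_mem hp).mono fun q hq => hU.differentiableAt_of_contDiffOn hf two_ne_zero hq
  have hd' : DifferentiableAt ℝ (fderiv ℝ f) p :=
    (hfp.fderiv_right (m := 1) le_rfl).differentiableAt one_ne_zero
  have hx : pdx f =ᶠ[𝓝 p] fun q => fderiv ℝ f q (1, 0) := hd.mono fun q hq => pdx_eq_fderiv hq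
  have ht : pdt f =ᶠ[𝓝 p] fun q => fderiv ℝ f q (0, 1) := hd.mono fun q hq => pdt_eq_fderiv hq
  rw [hx.pdt_eq, ht.pdx_eq, pdt_eq_fderiv (hd'.clm_apply (differentiableAt_const _)),
    pdx_eq_fderiv (hd'.clm_apply (differentiableAt_const _)),
    fderiv_clm_apply hd' (differentiableAt_const _), fderiv_clm_apply hd' (differentiableAt_const _)]
  simpa using (hfp.isSymmSndFDerivAt (by simp)).eq (0, 1) (1, 0)

lemma pdx_Lop (hU : IsOpen U) (hf : ContDiffOn ℝ 3 f U) (hp : p ∈ U) :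
    pdx (Lop k h f) p = Lop k h (pdx f) p := by
  have hx := hf.pdx hU (m := 2) (by norm_num)
  have hd {g : ℝ × ℝ → ℝ} {n : WithTop ℕ∞} (hg : ContDiffOn ℝ n g U) (hn : n ≠ 0) :
      HasDerivAt (fun x => g (x, p.2)) (pdx g p) p.1 :=
    hasDerivAt_pdx (hU.differentiableAt_of_contDiffOn hg hn hp)
  have e := (((hd (hx.pdx hU (m := 1) (by norm_num)) one_ne_zero).add
    ((hd hx two_ne_zero).const_mul (k - h - 1))).sub ((hd hf three_ne_zero).const_mul k)).sub
    (hd (hf.pdt hU (m := 2) (by norm_num)) two_ne_zero)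
  rw [Lop, pdt_pdx_eq_pdx_pdt hU (hf.of_le (by norm_num)) hp]
  exact e.deriv

lemma pdt_Lop (hU : IsOpen U) (hf : ContDiffOn ℝ 3 f U) (hp : p ∈ U) :
    pdt (Lop k h f) p = Lop k h (pdt f) p := by
  have hx := hf.pdx hU (m := 2) (by norm_num)
  have hd {g : ℝ × ℝ → ℝ} {n : WithTop ℕ∞} (hg : ContDiffOn ℝ n g U) (hn : n ≠ 0) :
      HasDerivAt (fun t => g (p.1, t)) (pdt g p) p.2 :=
    hasDerivAt_pdt (hU.differentiableAt_of_contDiffOn hg hn hp)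
  have e := (((hd (hx.pdx hU (m := 1) (by norm_num)) one_ne_zero).add
    ((hd hx two_ne_zero).const_mul (k - h - 1))).sub ((hd hf three_ne_zero).const_mul k)).sub
    (hd (hf.pdt hU (m := 2) (by norm_num)) two_ne_zero)
  have hxt : EqOn (pdt (pdx f)) (pdx (pdt f)) U := fun q hq =>
    pdt_pdx_eq_pdx_pdt hU (hf.of_le (by norm_num)) hq
  rw [Lop, ← hxt.pdx hU hp, ← pdt_pdx_eq_pdx_pdt hU hx hp, ← hxt hp]
  exact e.deriv

lemma Lop_mul (hU : IsOpen U) (hf : ContDiffOn ℝ 2 f U) (hg : ContDiffOn ℝ 2 g U)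
    (hp : p ∈ U) :
    Lop k h (f * g) p = (pdx (pdx f) p + (k - h - 1) * pdx f p - pdt f p) * g p
      + 2 * pdx f p * pdx g p + f p * Lop k h g p := by
  have hd {g : ℝ × ℝ → ℝ} {n : WithTop ℕ∞} (hg : ContDiffOn ℝ n g U) (hn : n ≠ 0) {q}
      (hq : q ∈ U) : DifferentiableAt ℝ g q :=
    hU.differentiableAt_of_contDiffOn hg hn hq
  have hfx := hf.pdx hU (m := 1) (by norm_num)
  have hgx := hg.pdx hU (m := 1) (by norm_num)
  have hx : EqOn (pdx (f * g)) (pdx f * g + f * pdx g) U := fun q hq =>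
    pdx_mul (hd hf two_ne_zero hq) (hd hg two_ne_zero hq)
  have hxx : pdx (pdx (f * g)) p = pdx (pdx f) p * g p + 2 * pdx f p * pdx g p
      + f p * pdx (pdx g) p := by
    rw [hx.pdx hU hp, pdx_add ((hd hfx one_ne_zero hp).mul (hd hg two_ne_zero hp))
      ((hd hf two_ne_zero hp).mul (hd hgx one_ne_zero hp)),
      pdx_mul (hd hfx one_ne_zero hp) (hd hg two_ne_zero hp),
      pdx_mul (hd hf two_ne_zero hp) (hd hgx one_ne_zero hp)]
    ring
  simp only [Lop, hxx, hx hp, pdt_mul (hd hf two_ne_zero hp) (hd hg two_ne_zero hp),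
    Pi.add_apply, Pi.mul_apply]
  ring

end

theorem stmt_8_general (K k h : ℝ)
    (U : Set (ℝ × ℝ)) (hU : IsOpen U)
    (w : ℝ × ℝ → ℝ) (hw : ContDiffOn ℝ 4 w U)
    (hLw : ∀ p ∈ U, Lop k h w p = k * K - h * Real.exp p.1)
    (hwxx : ∀ p ∈ U, 0 < pdx (pdx w) p)
    (v : ℝ × ℝ → ℝ)
    (hv : ∀ p : ℝ × ℝ, v p = pdt (pdx w) p / pdx (pdx w) p) :
    ∀ p ∈ U,
      pdx (pdx v) p
          + ((k - h - 1) + 2 * pdx (pdx (pdx w)) p / pdx (pdx w) p) * pdx v p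
          + (Lop k h (pdx (pdx w)) p / pdx (pdx w) p) * v p
          - pdt v p = 0
      ∧ Lop k h (pdx (pdx w)) p = -h * Real.exp p.1 := by
  intro p hp
  have hwx : ContDiffOn ℝ 3 (pdx w) U := hw.pdx hU (by norm_num)
  have hLwx : EqOn (Lop k h (pdx w)) (fun q => -h * exp q.1) U := fun q hq => by
    rw [← pdx_Lop hU (hw.of_le (by norm_num)) hq, EqOn.pdx hLw hU hq]
    simp [_root_.pdx]
  have hLwxx : Lop k h (pdx (pdx w)) p = -h * exp p.1 := by
    rw [← pdx_Lop hU hwx hp, hLwx.pdx hU hp]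
    simp [_root_.pdx]
  have hLwxt : Lop k h (pdt (pdx w)) p = 0 := by
    rw [← pdt_Lop hU hwx hp, hLwx.pdt hU hp]
    simp [_root_.pdt]
  have hb : ∀ q ∈ U, pdx (pdx w) q ≠ 0 := fun q hq => (hwxx q hq).ne'
  have hwxt : ContDiffOn ℝ 2 (pdt (pdx w)) U := hwx.pdt hU (by norm_num)
  have hwxx2 : ContDiffOn ℝ 2 (pdx (pdx w)) U := hwx.pdx hU (by norm_num)
  have hv2 : ContDiffOn ℝ 2 v U := (hwxt.div hwxx2 hb).congr fun q _ => hv q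
  have hprod : EqOn (pdt (pdx w)) (v * pdx (pdx w)) U := fun q hq => by
    simp [hv, div_mul_cancel₀ _ (hb q hq)]
  have hLprod := hLwxt ▸ (hprod.Lop hU hp).trans (Lop_mul hU hv2 hwxx2 hp)
  refine ⟨?_, hLwxx⟩
  field_simp [hb p hp]
  linear_combination -hLprod

/-- If `w` is `C⁴` on an open set `U` with `L w = kK - h e^x` and
`w_xx > 0` on `U`, then `v = w_xt / w_xx` is well defined on `U` and satisfies the
parabolic equation `v_xx + ((k-h-1) + 2 w_xxx/w_xx) v_x + ((L w_xx)/w_xx) v - v_t = 0`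
on `U`, where `L w_xx = -h e^x`. -/
theorem stmt_8 (K k h : ℝ) (hK : 0 < K)
    (U : Set (ℝ × ℝ)) (hU : IsOpen U)
    (w : ℝ × ℝ → ℝ) (hw : ContDiffOn ℝ 4 w U)
    (hLw : ∀ p ∈ U, Lop k h w p = k * K - h * Real.exp p.1)
    (hwxx : ∀ p ∈ U, 0 < pdx (pdx w) p)
    (v : ℝ × ℝ → ℝ)
    (hv : ∀ p : ℝ × ℝ, v p = pdt (pdx w) p / pdx (pdx w) p) :
    ∀ p ∈ U,
      pdx (pdx v) p
          + ((k - h - 1) + 2 * pdx (pdx (pdx w)) p / pdx (pdx w) p) * pdx v p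
          + (Lop k h (pdx (pdx w)) p / pdx (pdx w) p) * v p
          - pdt v p = 0
      ∧ Lop k h (pdx (pdx w)) p = -h * Real.exp p.1 :=
  stmt_8_general K k h U hU w hw hLw hwxx v hv
end

section
/- Let d ∈ ℝ, let s : (0,∞) → ℝ be continuous and strictly decreasing with s(t) < d for all t > 0, set C_d = {(x,t) : s(t) < x < d, t > 0} and let C̄_d be its closure. Let I be an open interval on which s is twice differentiable with s''(t) < 0 (strictly concave). Let v be continuous on C̄_d with v(s(t),t) = −s'(t) for t ∈ I, and suppose that for each t₀ ∈ I the one-sided partial derivative v_x(s(t₀),t₀) (from inside C_d) exists and is strictly positive. Then for every t₀ ∈ I, v does not attain an extremum at (s(t₀),t₀) with respect to any lower C̄_d-neighborhood of (s(t₀),t₀): for every neighborhood N of (s(t₀),t₀) in ℝ², v(s(t₀),t₀) is neither the maximum nor the minimum of v on N ∩ C̄_d ∩ {(x,t) : t ≤ t₀}. -/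
open Real Set Filter Topology

/-!
Moving from `(s t₀, t₀)` horizontally into `C_d` strictly increases `v`, because `v_x > 0` there,
so `v` has no maximum at that point. Moving down along the free boundary strictly decreases `v`:
there `v = -s'`, which is strictly increasing because `s` is strictly concave; so `v` has no
minimum there either. Both paths stay in the lower closed neighbourhood.
-/

theorem IsMaxOn.isLocalMaxOn_of_mem_nhds {α β : Type*} [TopologicalSpace α] [Preorder β]
    {f : α → β} {N S : Set α} {a : α} (h : IsMaxOn f (N ∩ S) a) (hN : N ∈ 𝓝 a) :
    IsLocalMaxOn f S a := by
  have := h.localize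
  rwa [IsLocalMaxOn, nhdsWithin_inter_of_mem (mem_nhdsWithin_of_mem_nhds hN)] at this

theorem IsMinOn.isLocalMinOn_of_mem_nhds {α β : Type*} [TopologicalSpace α] [Preorder β]
    {f : α → β} {N S : Set α} {a : α} (h : IsMinOn f (N ∩ S) a) (hN : N ∈ 𝓝 a) :
    IsLocalMinOn f S a := by
  have := h.localize
  rwa [IsLocalMinOn, nhdsWithin_inter_of_mem (mem_nhdsWithin_of_mem_nhds hN)] at this

theorem not_isLocalMaxOn_Icc_of_hasDerivWithinAt_pos {f : ℝ → ℝ} {a b f' : ℝ} (hab : a < b)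
    (hf : HasDerivWithinAt f f' (Icc a b) a) (hf' : 0 < f') : ¬ IsLocalMaxOn f (Icc a b) a := by
  intro hmax
  have hcone : b - a ∈ posTangentConeAt (Icc a b) a :=
    sub_mem_posTangentConeAt_of_segment_subset (segment_eq_Icc hab.le ▸ Subset.rfl)
  have hslope := hmax.hasFDerivWithinAt_nonpos hf hcone
  simp only [ContinuousLinearMap.toSpanSingleton_apply, smul_eq_mul] at hslope
  exact (mul_pos (sub_pos.2 hab) hf').not_ge hslope

theorem StrictMonoOn.not_isLocalMinOn_Ioc {α β : Type*} [TopologicalSpace α] [LinearOrder α]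
    [OrderTopology α] [DenselyOrdered α] [Preorder β] {g : α → β} {a b : α} (hab : a < b)
    (hg : StrictMonoOn g (Ioc a b)) : ¬ IsLocalMinOn g (Ioc a b) b := by
  intro hmin
  have hmin_left : ∀ᶠ t in 𝓝[<] b, g b ≤ g t :=
    nhdsWithin_mono b Iio_subset_Iic_self (nhdsWithin_Ioc_eq_nhdsLE hab ▸ hmin)
  have := nhdsLT_neBot_of_exists_lt ⟨a, hab⟩
  obtain ⟨t, hmin_t, ht⟩ := (hmin_left.and (Ioo_mem_nhdsLT hab)).exists
  exact (hg ⟨ht.1, ht.2.le⟩ ⟨hab, le_rfl⟩ ht.2).not_ge hmin_t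

theorem Icc_prod_singleton_subset_closure {s : ℝ → ℝ} {d t : ℝ} (ht : 0 < t) (hst : s t < d) :
    Icc (s t) d ×ˢ {t} ⊆ closure {p : ℝ × ℝ | 0 < p.2 ∧ s p.2 < p.1 ∧ p.1 < d} := by
  rw [← closure_Ioo hst.ne, ← closure_singleton, ← closure_prod_eq]
  refine closure_mono ?_
  rintro ⟨x, t'⟩ ⟨hx, rfl⟩
  exact ⟨ht, hx⟩

theorem stmt_10_general (d : ℝ) (s : ℝ → ℝ)
    (hsd : ∀ t ∈ Ioi (0:ℝ), s t < d)
    (Cd : Set (ℝ × ℝ))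
    (hCd : Cd = {p : ℝ × ℝ | 0 < p.2 ∧ s p.2 < p.1 ∧ p.1 < d})
    (I : Set ℝ) (a b : ℝ) (hI : I = Ioo a b) (hIpos : I ⊆ Ioi 0)
    (s' s'' : ℝ → ℝ)
    (hs' : ∀ t ∈ I, HasDerivAt s (s' t) t)
    (hs'' : ∀ t ∈ I, HasDerivAt s' (s'' t) t)
    (hconc : ∀ t ∈ I, s'' t < 0)
    (v : ℝ × ℝ → ℝ)
    (hvbd : ∀ t ∈ I, v (s t, t) = -s' t)
    (hvx : ∀ t₀ ∈ I, ∃ vx : ℝ, 0 < vx ∧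
      HasDerivWithinAt (fun x => v (x, t₀)) vx (Icc (s t₀) d) (s t₀)) :
    ∀ t₀ ∈ I, ∀ N ∈ nhds ((s t₀, t₀) : ℝ × ℝ),
      ¬ IsMaxOn v (N ∩ closure Cd ∩ {p : ℝ × ℝ | p.2 ≤ t₀}) (s t₀, t₀)
      ∧ ¬ IsMinOn v (N ∩ closure Cd ∩ {p : ℝ × ℝ | p.2 ≤ t₀}) (s t₀, t₀) := by
  subst hCd hI
  intro t₀ ht₀ N hN
  have hboundary : ∀ t ∈ Ioo a b, Icc (s t) d ×ˢ {t} ⊆ closure _ := fun t ht ↦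
    Icc_prod_singleton_subset_closure (hIpos ht) (hsd t (hIpos ht))
  rw [inter_assoc]
  constructor
  · intro hmax
    obtain ⟨vx, hvx_pos, hvx_deriv⟩ := hvx t₀ ht₀
    refine not_isLocalMaxOn_Icc_of_hasDerivWithinAt_pos (hsd t₀ (hIpos ht₀)) hvx_deriv hvx_pos ?_
    refine (hmax.isLocalMaxOn_of_mem_nhds hN).comp_continuousOn (g := fun x ↦ (x, t₀))
      (fun x hx ↦ ⟨hboundary t₀ ht₀ ⟨hx, rfl⟩, le_refl t₀⟩) (by fun_prop)
      ⟨le_rfl, (hsd t₀ (hIpos ht₀)).le⟩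
  · intro hmin
    have hIoc : Ioc a t₀ ⊆ Ioo a b := Ioc_subset_Ioo_right ht₀.2
    have hs'_anti : StrictAntiOn s' (Ioo a b) :=
      strictAntiOn_of_hasDerivWithinAt_neg (convex_Ioo a b)
        (fun t ht ↦ (hs'' t ht).continuousAt.continuousWithinAt)
        (fun t ht ↦ (hs'' t (interior_subset ht)).hasDerivWithinAt)
        (fun t ht ↦ hconc t (interior_subset ht))
    refine StrictMonoOn.not_isLocalMinOn_Ioc (g := fun t ↦ v (s t, t)) ht₀.1
      ((hs'_anti.neg.mono hIoc).congr fun t ht ↦ (hvbd t (hIoc ht)).symm) ?_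
    refine (hmin.isLocalMinOn_of_mem_nhds hN).comp_continuousOn (g := fun t ↦ (s t, t))
      (fun t ht ↦ ⟨hboundary t (hIoc ht) ⟨⟨le_rfl, (hsd t (hIpos (hIoc ht))).le⟩, rfl⟩, ht.2⟩)
      (fun t ht ↦ ((hs' t (hIoc ht)).continuousAt.prodMk continuousAt_id).continuousWithinAt)
      ⟨ht₀.1, le_rfl⟩

/-- If `s` is strictly concave on an open interval `I`, then for any
`t₀ ∈ I` the function `v` (equal to `-s'(t)` on the free boundary, with strictly
positive one-sided `x`-derivative at the boundary) cannot attain an extremum at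
`(s(t₀),t₀)` with respect to any lower `C̄_d`-neighborhood of `(s(t₀),t₀)`. -/
theorem stmt_10 (d : ℝ) (s : ℝ → ℝ)
    (hscont : ContinuousOn s (Ioi 0))
    (hsanti : StrictAntiOn s (Ioi 0))
    (hsd : ∀ t ∈ Ioi (0:ℝ), s t < d)
    (Cd : Set (ℝ × ℝ))
    (hCd : Cd = {p : ℝ × ℝ | 0 < p.2 ∧ s p.2 < p.1 ∧ p.1 < d})
    (I : Set ℝ) (a b : ℝ) (hI : I = Ioo a b) (hIpos : I ⊆ Ioi 0)
    (s' s'' : ℝ → ℝ)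
    (hs' : ∀ t ∈ I, HasDerivAt s (s' t) t)
    (hs'' : ∀ t ∈ I, HasDerivAt s' (s'' t) t)
    (hconc : ∀ t ∈ I, s'' t < 0)
    (v : ℝ × ℝ → ℝ)
    (hvcont : ContinuousOn v (closure Cd))
    (hvbd : ∀ t ∈ I, v (s t, t) = -s' t)
    (hvx : ∀ t₀ ∈ I, ∃ vx : ℝ, 0 < vx ∧
      HasDerivWithinAt (fun x => v (x, t₀)) vx (Icc (s t₀) d) (s t₀)) :
    ∀ t₀ ∈ I, ∀ N ∈ nhds ((s t₀, t₀) : ℝ × ℝ),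
      ¬ IsMaxOn v (N ∩ closure Cd ∩ {p : ℝ × ℝ | p.2 ≤ t₀}) (s t₀, t₀)
      ∧ ¬ IsMinOn v (N ∩ closure Cd ∩ {p : ℝ × ℝ | p.2 ≤ t₀}) (s t₀, t₀) :=
  stmt_10_general d s hsd Cd hCd I a b hI hIpos s' s'' hs' hs'' hconc v hvbd hvx
end
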